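/- arXiv:2212.14860 — 2 statements merged into one kernel-verified Lean document; each statement's English description precedes it below -/
import Mathlib

section
/- For every n ≥ 2 there is a 2-colouring of the edges of the complete graph on 9n vertices with colours red and blue containing no monochromatic copy of P_{3n+2}^2. Explicitly, one may take disjoint sets X_1,X_2,Y_1,Y_2 of size 2n, a set Z of size n−1 and one extra vertex z; colour all edges inside X_1 and inside X_2 blue, all edges inside Y_1 and inside Y_2 red, all edges in (X_1,X_2), (X_1,Z), (X_2,Z), (X_1,Y_2), (X_2,Y_1) red, all edges in (Y_1,Y_2), (Y_1,Z), (Y_2,Z), (X_1,Y_1), (X_2,Y_2) blue, all edges from z to X_1∪X_2 blue and from z to Y_1∪Y_2 red, and colour the edges inside Z∪{z} arbitrarily. -/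
/-!
Common definitions.  Colour convention for 2-edge-colourings `c : Sym2 V → Bool`:
`true` = red, `false` = blue.  For 3-colourings by `Fin 3`: `0` = red, `1` = blue,
`2` = purple.
-/

/-- The square of the path on `k` vertices: `i` and `j` are adjacent iff `1 ≤ |i - j| ≤ 2`. -/
def pathSq (k : ℕ) : SimpleGraph (Fin k) where
  Adj i j := i ≠ j ∧ i.val ≤ j.val + 2 ∧ j.val ≤ i.val + 2
  symm := by
    constructor
    rintro i j ⟨h1, h2, h3⟩
    exact ⟨h1.symm, h3, h2⟩
  loopless := by
    constructor
    rintro i ⟨h, -⟩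
    exact h rfl

/-- The square of the cycle on `k` vertices: vertices at (cyclic) distance `1` or `2`
are adjacent. -/
def cycleSq (k : ℕ) : SimpleGraph (ZMod k) where
  Adj i j := i ≠ j ∧ (j = i + 1 ∨ j = i + 2 ∨ i = j + 1 ∨ i = j + 2)
  symm := by
    constructor
    rintro i j ⟨h1, h2⟩
    exact ⟨h1.symm, by tauto⟩
  loopless := by
    constructor
    rintro i ⟨h, -⟩
    exact h rfl

/-- A 2-edge-coloured complete graph (with colouring `c`) contains a monochromatic copy
of the graph `H`. -/
def HasMonoCopy {W V : Type*} (H : SimpleGraph W) (c : Sym2 V → Bool) : Prop :=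
  ∃ (b : Bool) (f : W ↪ V), ∀ u v : W, H.Adj u v → c s(f u, f v) = b

/-- The subgraph of a 2-edge-coloured graph consisting of the edges of colour `b`. -/
def colourSubgraph {V : Type*} (G : SimpleGraph V) (c : Sym2 V → Bool) (b : Bool) :
    SimpleGraph V where
  Adj u v := G.Adj u v ∧ c s(u, v) = b
  symm := by
    constructor
    rintro u v ⟨h1, h2⟩
    exact ⟨h1.symm, by rwa [Sym2.eq_swap]⟩
  loopless := by
    constructor
    rintro u ⟨h, -⟩
    exact G.irrefl h

/-- Two edges are directly triangle-connected: they share a vertex and the two remaining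
endpoints are adjacent. -/
def EdgeTriangleAdj {V : Type*} (G : SimpleGraph V) (e f : Sym2 V) : Prop :=
  ∃ u v w, G.Adj u v ∧ G.Adj u w ∧ G.Adj v w ∧ e = s(u, v) ∧ f = s(u, w)

/-- Triangle-connectedness of edges: the reflexive-transitive closure of direct
triangle-connectedness.  Two edges lie in the same triangle component iff they are
triangle-connected. -/
def TriangleConnected {V : Type*} (G : SimpleGraph V) (e f : Sym2 V) : Prop :=
  Relation.ReflTransGen (EdgeTriangleAdj G) e f

/-- `t` is (the vertex set of) a triangle of `G`. -/
def IsTriangle {V : Type*} [DecidableEq V] (G : SimpleGraph V) (t : Finset V) : Prop :=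
  ∃ u v w, G.Adj u v ∧ G.Adj u w ∧ G.Adj v w ∧ t = {u, v, w}

/-- `e` is an edge inside the vertex set `t`. -/
def EdgeOf {V : Type*} (t : Finset V) (e : Sym2 V) : Prop := ∀ x ∈ e, x ∈ t

/-- `T` is a triangle-connected triangle factor (TCTF) of `G`: a collection of pairwise
vertex-disjoint triangles of `G` all of whose edges lie in a single triangle component. -/
def IsTCTF {V : Type*} [DecidableEq V] (G : SimpleGraph V) (T : Finset (Finset V)) : Prop :=
  (∀ t ∈ T, IsTriangle G t) ∧
  ((T : Set (Finset V)).Pairwise Disjoint) ∧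
  (∀ t ∈ T, ∀ t' ∈ T, ∀ e ∈ G.edgeSet, ∀ f ∈ G.edgeSet,
    EdgeOf t e → EdgeOf t' f → TriangleConnected G e f)

/-- The 2-edge-coloured graph `(G, c)` has a monochromatic TCTF on at least `s` vertices. -/
def HasMonoTCTF {V : Type*} [DecidableEq V] (G : SimpleGraph V) (c : Sym2 V → Bool)
    (s : ℝ) : Prop :=
  ∃ (b : Bool) (T : Finset (Finset V)),
    IsTCTF (colourSubgraph G c b) T ∧ s ≤ ((T.biUnion id).card : ℝ)

/-- The degree of `v` in `G`. -/
noncomputable def gdeg {V : Type*} (G : SimpleGraph V) (v : V) : ℕ :=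
  {u | G.Adj v u}.ncard

/-- `v` is `r`-`b` to `A`: `va` is an edge of colour `b` for all but at most `r` of the
vertices `a ∈ A`. -/
def VertexRColour {V K : Type*} (G : SimpleGraph V) (c : Sym2 V → K) (b : K) (r : ℝ)
    (v : V) (A : Finset V) : Prop :=
  ({a ∈ (A : Set V) | ¬(G.Adj v a ∧ c s(v, a) = b)}.ncard : ℝ) ≤ r

/-- The pair `(A, B)` is `r`-`b`: all but at most `r` vertices of `A` are `r`-`b` to `B`
and vice versa. -/
def PairRColour {V K : Type*} (G : SimpleGraph V) (c : Sym2 V → K) (b : K) (r : ℝ)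
    (A B : Finset V) : Prop :=
  ({a ∈ (A : Set V) | ¬VertexRColour G c b r a B}.ncard : ℝ) ≤ r ∧
  ({a ∈ (B : Set V) | ¬VertexRColour G c b r a A}.ncard : ℝ) ≤ r

/-- `M` is a matching of `G` (a set of pairwise vertex-disjoint edges of `G`). -/
def IsMatching' {V : Type*} (G : SimpleGraph V) (M : Finset (Sym2 V)) : Prop :=
  (∀ e ∈ M, e ∈ G.edgeSet) ∧
  ((M : Set (Sym2 V)).Pairwise fun e f => ∀ x, x ∈ e → x ∉ f)

/-- `M` is a connected matching of `G`: a matching all of whose edges lie in the same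
connected component of `G`. -/
def IsConnMatching {V : Type*} (G : SimpleGraph V) (M : Finset (Sym2 V)) : Prop :=
  IsMatching' G M ∧ ∀ e ∈ M, ∀ f ∈ M, ∀ u v : V, u ∈ e → v ∈ f → G.Reachable u v

/-- The number of neighbours of `v` (in the graph `G`) inside `A`. -/
noncomputable def nbrCountIn {V : Type*} (G : SimpleGraph V) (v : V) (A : Finset V) : ℕ :=
  {a ∈ (A : Set V) | G.Adj v a}.ncard

/-- In a colouring of a complete graph, the number of `b`-coloured neighbours of `v`
inside `A`. -/
noncomputable def colourNbrCount {V : Type*} (c : Sym2 V → Bool) (b : Bool) (v : V)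
    (A : Finset V) : ℕ :=
  {a ∈ (A : Set V) | a ≠ v ∧ c s(v, a) = b}.ncard

/-- Every vertex of `A` has at most `r` `b`-coloured neighbours in `B` and vice versa
(for a colouring of a complete graph). -/
def PairFewColour {V : Type*} (c : Sym2 V → Bool) (b : Bool) (r : ℝ) (A B : Finset V) :
    Prop :=
  (∀ v ∈ A, (colourNbrCount c b v B : ℝ) ≤ r) ∧
  (∀ v ∈ B, (colourNbrCount c b v A : ℝ) ≤ r)

/-- The number of edges of `G` with one endpoint in `A` and the other in `B`. -/
noncomputable def edgesBetween {V : Type*} (G : SimpleGraph V) (A B : Finset V) : ℕ :=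
  {e ∈ G.edgeSet | ∃ a ∈ A, ∃ b ∈ B, e = s(a, b)}.ncard

/-- Two cliques of `G'` (each with at least two vertices) are triangle-connected in `G'`:
some edge of one is triangle-connected to some edge of the other. -/
def CliquesTC {V : Type*} (G' : SimpleGraph V) (C C' : Finset V) : Prop :=
  ∃ u v w x, u ∈ C ∧ v ∈ C ∧ w ∈ C' ∧ x ∈ C' ∧ G'.Adj u v ∧ G'.Adj w x ∧
    TriangleConnected G' s(u, v) s(w, x)

/-- The parameter `m = |log ε| / 4` of the Setting. -/
noncomputable def mval (ε : ℝ) : ℝ := |Real.log ε| / 4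

/-- A clique decomposition of the 2-edge-coloured graph `(G, c)` with parameters `ε`, `t`
(the Setting of the paper): a partition of `V(G)` into a small set `Vbin` together with a
collection `cliques` of monochromatic cliques (`col K` is the colour of the clique `K`),
each of size between `2` and `m = |log ε|/4`, with at most `9t/m` cliques, such that each
vertex of a clique of colour `b` sends at most `20t/√m` edges of colour `b` to vertices
in cliques of colour `b` not `b`-triangle-connected to its own clique, and, for every
`k ≥ 1`, at most `400kt/|log ε|^{3/2}` of the cliques have fewer than `(1 - 1/k)m`
vertices. -/
def IsCliqueDecomp {V : Type*} [Fintype V] [DecidableEq V] (G : SimpleGraph V)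
    (c : Sym2 V → Bool) (ε t : ℝ) (Vbin : Finset V) (cliques : Finset (Finset V))
    (col : Finset V → Bool) : Prop :=
  (∀ K ∈ cliques, Disjoint K Vbin) ∧
  ((cliques : Set (Finset V)).Pairwise Disjoint) ∧
  (Vbin ∪ cliques.biUnion id = Finset.univ) ∧
  ((Vbin.card : ℝ) ≤ Real.sqrt ε * t + 40 * t / Real.sqrt (mval ε)) ∧
  ((cliques.card : ℝ) ≤ 9 * t / mval ε) ∧
  (∀ K ∈ cliques, 2 ≤ K.card ∧ (K.card : ℝ) ≤ mval ε ∧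
    ∀ u ∈ K, ∀ v ∈ K, u ≠ v → G.Adj u v ∧ c s(u, v) = col K) ∧
  (∀ b : Bool, ∀ C ∈ cliques, col C = b → ∀ u ∈ C,
    ({v | ∃ C' ∈ cliques, col C' = b ∧ v ∈ C' ∧
        ¬CliquesTC (colourSubgraph G c b) C C' ∧
        (colourSubgraph G c b).Adj u v}.ncard : ℝ) ≤ 20 * t / Real.sqrt (mval ε)) ∧
  (∀ k : ℕ, 1 ≤ k →
    ({K ∈ (cliques : Set (Finset V)) | (K.card : ℝ) < (1 - 1 / (k : ℝ)) * mval ε}.ncard : ℝ)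
      ≤ 400 * k * t / Real.sqrt (|Real.log ε| ^ 3))

/-- Recolour the purple (`2`) edges of a 3-colouring by red (`true`) or blue (`false`),
producing a 2-colouring (`true` = red, `false` = blue). -/
def recolourPurple {V : Type*} (c : Sym2 V → Fin 3) (b : Bool) : Sym2 V → Bool :=
  fun e => if c e = 2 then b else decide (c e = 0)

/-!
The construction is invariant under swapping the colours together with
`(X₁, X₂, Y₁, Y₂) ↦ (Y₁, Y₂, X₂, X₁)`, so consider a red copy of `P²_{3n+2}`. Every red triangle
lies in one of the zones `X₁ ∪ X₂ ∪ Z ∪ {z}`, `Y₁ ∪ X₂ ∪ {z}`, `Y₂ ∪ X₁ ∪ {z}`, and two zones meet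
in a red-independent set. Consecutive triangles of the copy share an edge, hence lie in the same
zone, so the whole copy lies in one zone. In the first zone, `X₁ ∪ X₂ ∪ {z}` spans no red
triangle, so each of the `n` disjoint triples of consecutive path vertices meets `Z`, which has
only `n - 1` vertices. In the second (and symmetrically the third), `X₂ ∪ {z}` is
red-independent, so it holds at most `n + 1` of the `3n + 2` path vertices and the other `2n + 1`
fall into `Y₁`, which has only `2n`.
-/

open Finset SimpleGraph

variable {V : Type*} {G : SimpleGraph V} {k : ℕ}

lemma pathSq_adj_iff {i j : Fin k} :
    (pathSq k).Adj i j ↔ (i : ℕ) ≠ j ∧ (i : ℕ) ≤ j + 2 ∧ (j : ℕ) ≤ i + 2 := by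
  simp [pathSq, Fin.val_ne_iff]

lemma pathSq_triple_adj (φ : pathSq k →g G) {m : ℕ} (hm : m + 2 < k) :
    G.Adj (φ ⟨m, by omega⟩) (φ ⟨m + 1, by omega⟩) ∧ G.Adj (φ ⟨m, by omega⟩) (φ ⟨m + 2, hm⟩) ∧
      G.Adj (φ ⟨m + 1, by omega⟩) (φ ⟨m + 2, hm⟩) :=
  ⟨φ.map_adj (pathSq_adj_iff.2 (by simp; omega)), φ.map_adj (pathSq_adj_iff.2 (by simp; omega)),
    φ.map_adj (pathSq_adj_iff.2 (by simp))⟩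

lemma three_mul_card_le_of_isIndepSet_pathSq {P : Finset (Fin k)}
    (hP : (pathSq k).IsIndepSet P) : 3 * #P ≤ k + 2 := by
  have : #P ≤ #(range ((k + 2) / 3)) := by
    refine card_le_card_of_injOn (fun i => (i : ℕ) / 3)
      (fun i _ => by simp only [coe_range, Set.mem_Iio]; omega) ?_
    intro i hi j hj hij
    by_contra hne
    exact hP hi hj hne (pathSq_adj_iff.2 (by simp only at hij; omega))
  simp only [card_range] at this
  omega

lemma le_three_mul_card_of_meets_triples {P : Finset (Fin k)}
    (hP : ∀ m, m + 2 < k → ∃ i ∈ P, m ≤ (i : ℕ) ∧ (i : ℕ) ≤ m + 2) : k ≤ 3 * #P + 2 := by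
  have : #(range (k / 3)) ≤ #P := by
    refine card_le_card_of_surjOn (fun i => (i : ℕ) / 3) fun j hj => ?_
    obtain ⟨i, hi, hij⟩ := hP (3 * j) (by simp only [coe_range, Set.mem_Iio] at hj; omega)
    exact ⟨i, hi, by simp only; omega⟩
  simp only [card_range] at this
  omega

theorem exists_forall_mem_zone_of_pathSq {ι : Type*} (hk : 3 ≤ k) (φ : pathSq k →g G)
    (zone : ι → Set V) (htri : ∀ t : Finset V, G.IsNClique 3 t → ∃ i, ↑t ⊆ zone i)
    (hsep : ∀ i j, i ≠ j → G.IsIndepSet (zone i ∩ zone j)) :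
    ∃ i, ∀ p, φ p ∈ zone i := by
  classical
  have hwin : ∀ m (hm : m + 2 < k), ∃ i, φ ⟨m, by omega⟩ ∈ zone i ∧
      φ ⟨m + 1, by omega⟩ ∈ zone i ∧ φ ⟨m + 2, hm⟩ ∈ zone i := fun m hm => by
    simpa [Set.insert_subset_iff] using htri _ (is3Clique_triple_iff.2 (pathSq_triple_adj φ hm))
  obtain ⟨i, hi⟩ := hwin 0 (by omega)
  have hall : ∀ m (hm : m + 2 < k), φ ⟨m, by omega⟩ ∈ zone i ∧
      φ ⟨m + 1, by omega⟩ ∈ zone i ∧ φ ⟨m + 2, hm⟩ ∈ zone i := by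
    intro m
    induction m with
    | zero => exact fun _ => hi
    | succ m ih =>
      intro hm
      obtain ⟨-, h₁, h₂⟩ := ih (by omega)
      obtain ⟨j, hj₀, hj₁, hj₂⟩ := hwin (m + 1) hm
      obtain rfl : j = i := by
        by_contra hji
        have hadj := (pathSq_triple_adj φ (m := m) (by omega)).2.2
        exact hsep j i hji ⟨hj₀, h₁⟩ ⟨hj₁, h₂⟩ hadj.ne hadj
      exact ⟨hj₀, hj₁, hj₂⟩
  refine ⟨i, fun ⟨p, hp⟩ => ?_⟩
  by_cases hpk : p + 2 < k
  · exact (hall p hpk).1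
  · obtain ⟨-, h₁, h₂⟩ := hall (k - 3) (by omega)
    obtain rfl | rfl : p = k - 3 + 1 ∨ p = k - 3 + 2 := by omega
    exacts [h₁, h₂]

theorem le_three_mul_card_of_copy_pathSq_cliqueFreeOn (φ : (pathSq k).Copy G) {Z : Finset V}
    {T : Set V} (hT : G.CliqueFreeOn T 3) (hφ : ∀ p, φ p ∈ Z ∨ φ p ∈ T) : k ≤ 3 * #Z + 2 := by
  classical
  calc k ≤ 3 * #{p | φ p ∈ Z} + 2 := le_three_mul_card_of_meets_triples fun m hm => ?_
    _ ≤ 3 * #Z + 2 := by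
      gcongr
      exact card_le_card_of_injOn φ (fun p hp => by simpa using hp) φ.injective.injOn
  by_contra! h
  have hT' : ∀ p : Fin k, m ≤ p → p ≤ m + 2 → φ p ∈ T := fun p h₁ h₂ =>
    (hφ p).resolve_left fun hp => (h p (by simpa using hp) h₁).not_ge h₂
  refine hT (t := {φ ⟨m, by omega⟩, φ ⟨m + 1, by omega⟩, φ ⟨m + 2, hm⟩}) ?_
    (is3Clique_triple_iff.2 (pathSq_triple_adj φ.toHom hm))
  simp [Set.insert_subset_iff, hT']

theorem two_mul_le_three_mul_card_of_copy_pathSq_isIndepSet (φ : (pathSq k).Copy G)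
    {B : Finset V} {I : Set V} (hI : G.IsIndepSet I) (hφ : ∀ p, φ p ∈ B ∨ φ p ∈ I) :
    2 * k ≤ 3 * #B + 2 := by
  classical
  have hin : 3 * #{p | φ p ∈ I} ≤ k + 2 :=
    three_mul_card_le_of_isIndepSet_pathSq fun p hp q hq hpq hadj =>
      hI (by simpa using hp) (by simpa using hq) (φ.injective.ne hpq) (φ.toHom.map_adj hadj)
  have hout : #{p | φ p ∉ I} ≤ #B :=
    card_le_card_of_injOn φ (fun p hp => (hφ p).resolve_right (by simpa using hp))
      φ.injective.injOn
  have hsum := card_filter_add_card_filter_not (s := univ) fun p => φ p ∈ I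
  rw [card_univ, Fintype.card_fin] at hsum
  omega

theorem SimpleGraph.IsClique.subset_of_neighborSet_subset {s Y : Set V} (hs : G.IsClique s)
    {u : V} (hus : u ∈ s) (huY : u ∈ Y) (hY : G.neighborSet u ⊆ Y) : s ⊆ Y := fun v hv =>
  (eq_or_ne u v).elim (· ▸ huY) fun huv => hY (hs hus hv huv)

theorem SimpleGraph.cliqueFreeOn_union_of_isIndepSet {s t : Set V} (hs : G.IsIndepSet s)
    (ht : G.IsIndepSet t) : G.CliqueFreeOn (s ∪ t) 3 := by
  classical
  intro u hu hu3
  obtain ⟨a, b, c, hab, hac, hbc, hu_eq⟩ := is3Clique_iff.1 hu3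
  subst hu_eq
  simp only [coe_insert, coe_singleton, Set.insert_subset_iff, Set.singleton_subset_iff,
    Set.mem_union] at hu
  obtain ⟨ha | ha, hb | hb, hc | hc⟩ := hu
  exacts [hs ha hb hab.ne hab, hs ha hb hab.ne hab, hs ha hc hac.ne hac, ht hb hc hbc.ne hbc,
    hs hb hc hbc.ne hbc, ht ha hc hac.ne hac, ht ha hb hab.ne hab, ht ha hb hab.ne hab]

theorem isEmpty_copy_pathSq_of_partition {n : ℕ} {A₁ A₂ B₁ B₂ Z : Finset V} {z : V}
    (hcover : ∀ x, x ∈ A₁ ∨ x ∈ A₂ ∨ x ∈ B₁ ∨ x ∈ B₂ ∨ x ∈ Z ∨ x = z)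
    (hA₁A₂ : Disjoint A₁ A₂) (hA₁B₁ : Disjoint A₁ B₁) (hA₂B₂ : Disjoint A₂ B₂)
    (hB₁B₂ : Disjoint B₁ B₂) (hB₁Z : Disjoint B₁ Z) (hB₂Z : Disjoint B₂ Z)
    (hA₁ : G.IsIndepSet (insert z ↑A₁)) (hA₂ : G.IsIndepSet (insert z ↑A₂))
    (hB₁ : ∀ u ∈ B₁, G.neighborSet u ⊆ ↑B₁ ∪ insert z ↑A₂)
    (hB₂ : ∀ u ∈ B₂, G.neighborSet u ⊆ ↑B₂ ∪ insert z ↑A₁)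
    (hB₁card : #B₁ ≤ 2 * n) (hB₂card : #B₂ ≤ 2 * n) (hZ : #Z < n) :
    IsEmpty ((pathSq (3 * n + 2)).Copy G) := by
  refine ⟨fun φ => ?_⟩
  rw [Finset.disjoint_left] at hA₁A₂ hA₁B₁ hA₂B₂ hB₁B₂ hB₁Z hB₂Z
  set zone : Fin 3 → Set V :=
    ![↑Z ∪ (insert z ↑A₁ ∪ insert z ↑A₂), ↑B₁ ∪ insert z ↑A₂, ↑B₂ ∪ insert z ↑A₁] with hzone
  have htri : ∀ t : Finset V, G.IsNClique 3 t → ∃ i, ↑t ⊆ zone i := by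
    intro t ht
    by_cases h₁ : ∃ u ∈ t, u ∈ B₁
    · obtain ⟨u, hut, hu⟩ := h₁
      exact ⟨1, ht.isClique.subset_of_neighborSet_subset hut (Or.inl hu) (hB₁ u hu)⟩
    by_cases h₂ : ∃ u ∈ t, u ∈ B₂
    · obtain ⟨u, hut, hu⟩ := h₂
      exact ⟨2, ht.isClique.subset_of_neighborSet_subset hut (Or.inl hu) (hB₂ u hu)⟩
    push Not at h₁ h₂
    refine ⟨0, fun v hv => ?_⟩
    have := h₁ v hv
    have := h₂ v hv
    simp only [hzone, Matrix.cons_val_zero, Set.mem_union, Set.mem_insert_iff, mem_coe]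
    rcases hcover v with h | h | h | h | h | h <;> tauto
  have hsep : ∀ i j, i ≠ j → G.IsIndepSet (zone i ∩ zone j) := by
    have h₀₁ : G.IsIndepSet (zone 0 ∩ zone 1) := hA₂.mono fun v ⟨h₀, h₁⟩ => by
      have := @hA₁B₁ v
      have := @hB₁Z v
      simp only [hzone, Matrix.cons_val_zero, Matrix.cons_val_one, Set.mem_union,
        Set.mem_insert_iff, mem_coe] at h₀ h₁ ⊢
      tauto
    have h₀₂ : G.IsIndepSet (zone 0 ∩ zone 2) := hA₁.mono fun v ⟨h₀, h₂⟩ => by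
      have := @hA₂B₂ v
      have := @hB₂Z v
      simp only [hzone, Matrix.cons_val, Matrix.cons_val_zero, Set.mem_union,
        Set.mem_insert_iff, mem_coe] at h₀ h₂ ⊢
      tauto
    have h₁₂ : G.IsIndepSet (zone 1 ∩ zone 2) := (Set.pairwise_singleton z _).mono
      fun v ⟨h₁, h₂⟩ => by
        have := @hA₁A₂ v
        have := @hA₁B₁ v
        have := @hA₂B₂ v
        have := @hB₁B₂ v
        simp only [hzone, Matrix.cons_val, Matrix.cons_val_zero, Matrix.cons_val_one, Set.mem_union,
          Set.mem_insert_iff, mem_coe, Set.mem_singleton_iff] at h₁ h₂ ⊢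
        tauto
    intro i j hij
    fin_cases i <;> fin_cases j <;> first | exact absurd rfl hij | assumption | rwa [Set.inter_comm]
  obtain ⟨i, hi⟩ := exists_forall_mem_zone_of_pathSq (by omega) φ.toHom zone htri hsep
  fin_cases i
  · have := le_three_mul_card_of_copy_pathSq_cliqueFreeOn φ
      (cliqueFreeOn_union_of_isIndepSet hA₁ hA₂) hi
    omega
  · have := two_mul_le_three_mul_card_of_copy_pathSq_isIndepSet φ hA₂ hi
    omega
  · have := two_mul_le_three_mul_card_of_copy_pathSq_isIndepSet φ hA₁ hi
    omega

theorem HasMonoCopy.exists_copy_colourSubgraph {W : Type*} {H : SimpleGraph W}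
    {c : Sym2 V → Bool} (h : HasMonoCopy H c) : ∃ b, Nonempty (H.Copy (colourSubgraph ⊤ c b)) := by
  obtain ⟨b, f, hf⟩ := h
  exact ⟨b, ⟨⟨⟨f, fun {u v} huv => ⟨f.injective.ne huv.ne, hf u v huv⟩⟩, f.injective⟩⟩⟩

lemma not_colourSubgraph_adj_of_eq_not {c : Sym2 V → Bool} {b : Bool} {u v : V}
    (h : c s(u, v) = !b) : ¬(colourSubgraph G c b).Adj u v := fun ⟨_, h'⟩ =>
  Bool.not_ne_self b (h ▸ h')

theorem isEmpty_copy_pathSq_colourSubgraph_of_partition [DecidableEq V] {n : ℕ}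
    {A₁ A₂ B₁ B₂ Z : Finset V} {z : V} {c : Sym2 V → Bool} {b : Bool}
    (hcover : ∀ x, x ∈ A₁ ∨ x ∈ A₂ ∨ x ∈ B₁ ∨ x ∈ B₂ ∨ x ∈ Z ∨ x = z)
    (hA₁A₂ : Disjoint A₁ A₂) (hA₁B₁ : Disjoint A₁ B₁) (hA₂B₂ : Disjoint A₂ B₂)
    (hB₁B₂ : Disjoint B₁ B₂) (hB₁Z : Disjoint B₁ Z) (hB₂Z : Disjoint B₂ Z)
    (cA₁ : ∀ u ∈ A₁, ∀ v ∈ A₁, u ≠ v → c s(u, v) = !b)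
    (cA₂ : ∀ u ∈ A₂, ∀ v ∈ A₂, u ≠ v → c s(u, v) = !b)
    (cB₁B₂ : ∀ u ∈ B₁, ∀ v ∈ B₂, c s(u, v) = !b)
    (cB₁Z : ∀ u ∈ B₁, ∀ v ∈ Z, c s(u, v) = !b)
    (cB₂Z : ∀ u ∈ B₂, ∀ v ∈ Z, c s(u, v) = !b)
    (cA₁B₁ : ∀ u ∈ A₁, ∀ v ∈ B₁, c s(u, v) = !b)
    (cA₂B₂ : ∀ u ∈ A₂, ∀ v ∈ B₂, c s(u, v) = !b)
    (czA : ∀ v ∈ A₁ ∪ A₂, c s(z, v) = !b)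
    (hB₁card : #B₁ ≤ 2 * n) (hB₂card : #B₂ ≤ 2 * n) (hZ : #Z < n) :
    IsEmpty ((pathSq (3 * n + 2)).Copy (colourSubgraph ⊤ c b)) := by
  have hindep : ∀ A ⊆ A₁ ∪ A₂, (∀ u ∈ A, ∀ v ∈ A, u ≠ v → c s(u, v) = !b) →
      (colourSubgraph ⊤ c b).IsIndepSet (insert z ↑A) := by
    intro A hA cA u hu v hv huv
    simp only [Set.mem_insert_iff, mem_coe] at hu hv
    rcases hu with rfl | hu <;> rcases hv with rfl | hv
    · exact absurd rfl huv
    · exact not_colourSubgraph_adj_of_eq_not (czA v (hA hv))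
    · exact fun h => not_colourSubgraph_adj_of_eq_not (czA u (hA hu)) h.symm
    · exact not_colourSubgraph_adj_of_eq_not (cA u hu v hv huv)
  refine isEmpty_copy_pathSq_of_partition hcover hA₁A₂ hA₁B₁ hA₂B₂ hB₁B₂ hB₁Z hB₂Z
    (hindep A₁ subset_union_left cA₁) (hindep A₂ subset_union_right cA₂) ?_ ?_
    hB₁card hB₂card hZ
  · intro u hu v huv
    rcases hcover v with h | h | h | h | h | h
    · exact absurd huv.symm (not_colourSubgraph_adj_of_eq_not (cA₁B₁ v h u hu))
    · simp [h]
    · simp [h]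
    · exact absurd huv (not_colourSubgraph_adj_of_eq_not (cB₁B₂ u hu v h))
    · exact absurd huv (not_colourSubgraph_adj_of_eq_not (cB₁Z u hu v h))
    · simp [h]
  · intro u hu v huv
    rcases hcover v with h | h | h | h | h | h
    · simp [h]
    · exact absurd huv.symm (not_colourSubgraph_adj_of_eq_not (cA₂B₂ v h u hu))
    · exact absurd huv.symm (not_colourSubgraph_adj_of_eq_not (cB₁B₂ v h u hu))
    · simp [h]
    · exact absurd huv (not_colourSubgraph_adj_of_eq_not (cB₂Z u hu v h))
    · simp [h]

lemma forall_mem_forall_mem_sym2_comm {α β : Type*} {f : Sym2 α → β} {A B : Finset α} {y : β}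
    (h : ∀ u ∈ A, ∀ v ∈ B, f s(u, v) = y) : ∀ u ∈ B, ∀ v ∈ A, f s(u, v) = y :=
  fun u hu v hv => Sym2.eq_swap (a := v) ▸ h v hv u hu

/-- For every `n ≥ 2`, the explicit red/blue colouring of the complete graph
on `9n` vertices described in the paper (with `|X₁| = |X₂| = |Y₁| = |Y₂| = 2n`,
`|Z| = n - 1`, one extra vertex `z`, and the edges inside `Z ∪ {z}` coloured arbitrarily)
contains no monochromatic copy of `P_{3n+2}²`.  Colours: `true` = red, `false` = blue. -/
theorem lower_bound_construction_P3n2 (n : ℕ) (hn : 2 ≤ n)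
    (X1 X2 Y1 Y2 Z : Finset (Fin (9 * n))) (z : Fin (9 * n))
    (hdisj : ([X1, X2, Y1, Y2, Z, {z}] : List (Finset (Fin (9 * n)))).Pairwise Disjoint)
    (hcover : X1 ∪ X2 ∪ Y1 ∪ Y2 ∪ Z ∪ {z} = Finset.univ)
    (hX1 : X1.card = 2 * n) (hX2 : X2.card = 2 * n)
    (hY1 : Y1.card = 2 * n) (hY2 : Y2.card = 2 * n)
    (hZ : Z.card = n - 1)
    (c : Sym2 (Fin (9 * n)) → Bool)
    (hX1in : ∀ u ∈ X1, ∀ v ∈ X1, u ≠ v → c s(u, v) = false)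
    (hX2in : ∀ u ∈ X2, ∀ v ∈ X2, u ≠ v → c s(u, v) = false)
    (hY1in : ∀ u ∈ Y1, ∀ v ∈ Y1, u ≠ v → c s(u, v) = true)
    (hY2in : ∀ u ∈ Y2, ∀ v ∈ Y2, u ≠ v → c s(u, v) = true)
    (hX1X2 : ∀ u ∈ X1, ∀ v ∈ X2, c s(u, v) = true)
    (hX1Z : ∀ u ∈ X1, ∀ v ∈ Z, c s(u, v) = true)
    (hX2Z : ∀ u ∈ X2, ∀ v ∈ Z, c s(u, v) = true)
    (hX1Y2 : ∀ u ∈ X1, ∀ v ∈ Y2, c s(u, v) = true)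
    (hX2Y1 : ∀ u ∈ X2, ∀ v ∈ Y1, c s(u, v) = true)
    (hY1Y2 : ∀ u ∈ Y1, ∀ v ∈ Y2, c s(u, v) = false)
    (hY1Z : ∀ u ∈ Y1, ∀ v ∈ Z, c s(u, v) = false)
    (hY2Z : ∀ u ∈ Y2, ∀ v ∈ Z, c s(u, v) = false)
    (hX1Y1 : ∀ u ∈ X1, ∀ v ∈ Y1, c s(u, v) = false)
    (hX2Y2 : ∀ u ∈ X2, ∀ v ∈ Y2, c s(u, v) = false)
    (hzX : ∀ v ∈ X1 ∪ X2, c s(z, v) = false)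
    (hzY : ∀ v ∈ Y1 ∪ Y2, c s(z, v) = true) :
    ¬HasMonoCopy (pathSq (3 * n + 2)) c := by
  intro hcopy
  obtain ⟨b, ⟨φ⟩⟩ := hcopy.exists_copy_colourSubgraph
  have hcov : ∀ x, x ∈ X1 ∨ x ∈ X2 ∨ x ∈ Y1 ∨ x ∈ Y2 ∨ x ∈ Z ∨ x = z := fun x => by
    simpa only [mem_union, mem_singleton, or_assoc] using hcover.ge (mem_univ x)
  obtain ⟨⟨dX1X2, dX1Y1, dX1Y2, dX1Z, -⟩, ⟨dX2Y1, dX2Y2, dX2Z, -⟩, ⟨dY1Y2, dY1Z, -⟩, ⟨dY2Z, -⟩,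
    -⟩ := by simpa using hdisj
  have hZn : #Z < n := by omega
  cases b
  · exact (isEmpty_copy_pathSq_colourSubgraph_of_partition (A₁ := Y1) (A₂ := Y2) (B₁ := X2)
      (B₂ := X1) (fun x => by have := hcov x; tauto) dY1Y2 dX2Y1.symm dX1Y2.symm dX1X2.symm dX2Z
      dX1Z hY1in hY2in (forall_mem_forall_mem_sym2_comm hX1X2) hX2Z hX1Z
      (forall_mem_forall_mem_sym2_comm hX2Y1) (forall_mem_forall_mem_sym2_comm hX1Y2) hzY
      hX2.le hX1.le hZn).false φ
  · exact (isEmpty_copy_pathSq_colourSubgraph_of_partition hcov dX1X2 dX1Y1 dX2Y2 dY1Y2 dY1Z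
      dY2Z hX1in hX2in hY1Y2 hY1Z hY2Z hX1Y1 hX2Y2 hzX hY1.le hY2.le hZn).false φ
end

section
/- Let k be a positive integer and let b_1 ≥ b_2 ≥ … ≥ b_k > 0 be positive reals such that Σ_{i>1} b_i > b_1. Then {1,…,k} can be partitioned into two sets A and B such that, writing α = Σ_{i∈A} b_i and β = Σ_{i∈B} b_i, one has 2α ≥ β ≥ α. -/
/-!
Among all splittings `A ⊔ Aᶜ` with `∑_A b ≤ ∑_{Aᶜ} b`, take one whose gap `∑_{Aᶜ} b - ∑_A b` is
minimal in absolute value. Moving any `j ∈ Aᶜ` into `A` changes the gap by `-2 b_j` without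
decreasing its absolute value, so every `b_j` with `j ∈ Aᶜ` is at least the gap. If `Aᶜ` has
two elements, `∑_{Aᶜ} b` is therefore at least twice the gap, which is `∑_{Aᶜ} b ≤ 2 ∑_A b`.
`Aᶜ` cannot be a single `{j}`, because no `b_j` is half of the total: this is where
`b_1 < ∑_{i>1} b_i` and the monotonicity enter.
-/

open Finset

section PartitionGap

variable {ι : Type*} [Fintype ι] [DecidableEq ι]

def partitionGap (b : ι → ℝ) (A : Finset ι) : ℝ := ∑ i ∈ Aᶜ, b i - ∑ i ∈ A, b i

variable {b : ι → ℝ} {A : Finset ι}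

theorem partitionGap_compl (b : ι → ℝ) (A : Finset ι) :
    partitionGap b Aᶜ = -partitionGap b A := by
  rw [partitionGap, partitionGap, compl_compl, neg_sub]

theorem partitionGap_insert {j : ι} (hj : j ∉ A) :
    partitionGap b (insert j A) = partitionGap b A - 2 * b j := by
  rw [partitionGap, partitionGap, compl_insert, sum_erase_eq_sub (mem_compl.2 hj),
    sum_insert hj]
  ring

theorem exists_partitionGap_nonneg_le_abs (b : ι → ℝ) :
    ∃ A : Finset ι, 0 ≤ partitionGap b A ∧ ∀ A', partitionGap b A ≤ |partitionGap b A'| := by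
  obtain ⟨A, hA⟩ := Finite.exists_min fun A : Finset ι => |partitionGap b A|
  rcases le_total 0 (partitionGap b A) with h | h
  · exact ⟨A, h, fun A' => abs_of_nonneg h ▸ hA A'⟩
  · refine ⟨Aᶜ, by rw [partitionGap_compl]; linarith, fun A' => ?_⟩
    rw [partitionGap_compl, ← abs_of_nonpos h]
    exact hA A'

theorem partitionGap_le_of_le_abs (hmin : ∀ A', partitionGap b A ≤ |partitionGap b A'|)
    {j : ι} (hj : j ∉ A) (hbj : 0 < b j) : partitionGap b A ≤ b j := by
  have h := hmin (insert j A)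
  rw [partitionGap_insert hj] at h
  rcases le_abs'.1 h with h | h <;> linarith

end PartitionGap

theorem exists_sum_le_sum_compl_le_two_mul_sum {ι : Type*} [Fintype ι] [DecidableEq ι]
    {b : ι → ℝ} (hpos : ∀ i, 0 < b i) (hsmall : ∀ j, 2 * b j < ∑ i, b i) :
    ∃ A : Finset ι, ∑ i ∈ A, b i ≤ ∑ i ∈ Aᶜ, b i ∧ ∑ i ∈ Aᶜ, b i ≤ 2 * ∑ i ∈ A, b i := by
  obtain ⟨A, hgap, hmin⟩ := exists_partitionGap_nonneg_le_abs b
  have hle : ∀ j ∈ Aᶜ, partitionGap b A ≤ b j := fun j hj =>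
    partitionGap_le_of_le_abs hmin (mem_compl.1 hj) (hpos j)
  have htotal := sum_add_sum_compl A b
  rw [partitionGap] at hgap hle
  refine ⟨A, by linarith, ?_⟩
  obtain hcard | hcard | hcard : #Aᶜ = 0 ∨ #Aᶜ = 1 ∨ 2 ≤ #Aᶜ := by omega
  · rw [card_eq_zero.1 hcard, sum_empty]
    exact mul_nonneg zero_le_two (sum_nonneg fun i _ => (hpos i).le)
  · obtain ⟨j, hj⟩ := card_eq_one.1 hcard
    rw [hj, sum_singleton] at hgap htotal
    linarith [hsmall j]
  · have h := card_nsmul_le_sum Aᶜ b _ hle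
    rw [nsmul_eq_mul] at h
    have h2 : (2 : ℝ) ≤ #Aᶜ := by exact_mod_cast hcard
    linarith [mul_le_mul_of_nonneg_right h2 hgap]

/-- If `b₁ ≥ … ≥ b_k > 0` and `∑_{i>1} bᵢ > b₁`, then the index set can
be split into `A` and `B` with `2·∑_A b ≥ ∑_B b ≥ ∑_A b`. -/
theorem balanced_partition_of_reals (k : ℕ) (hk : 0 < k) (b : Fin k → ℝ)
    (hpos : ∀ i, 0 < b i)
    (hmono : ∀ i j : Fin k, i ≤ j → b j ≤ b i)
    (hsum : b ⟨0, hk⟩ < ∑ i ∈ Finset.univ.erase ⟨0, hk⟩, b i) :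
    ∃ A B : Finset (Fin k), Disjoint A B ∧ A ∪ B = Finset.univ ∧
      (∑ i ∈ A, b i) ≤ (∑ i ∈ B, b i) ∧ (∑ i ∈ B, b i) ≤ 2 * (∑ i ∈ A, b i) := by
  have hsmall : ∀ j, 2 * b j < ∑ i, b i := fun j => by
    have hj := hmono ⟨0, hk⟩ j (Fin.le_iff_val_le_val.2 (Nat.zero_le _))
    linarith [add_sum_erase univ b (mem_univ ⟨0, hk⟩)]
  obtain ⟨A, hle, hle_two⟩ := exists_sum_le_sum_compl_le_two_mul_sum hpos hsmall
  exact ⟨A, Aᶜ, disjoint_compl_right, union_compl A, hle, hle_two⟩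
end
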